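/- For every positive integer n, nonnegative integer m, and real x > -1, the modified Bell polynomial satisfies P_m(H_n^{(1)}(x), ..., H_n^{(m)}(x)) = (1/B(n,1+x)) · ∫_0^∞ e^{-(1+x)y} (1-e^{-y})^{n-1} y^m/m! dy. -/

import Mathlib

/-- The modified Bell polynomials, defined by the generating function
`exp (∑_{k≥1} x_k z^k / k) = ∑_{m≥0} P_m(x_1,…,x_m) z^m`, via the
equivalent recursion `(m+1) P_{m+1} = ∑_{k=1}^{m+1} x_k P_{m+1-k}`. -/
noncomputable def modifiedBell (x : ℕ → ℝ) : ℕ → ℝ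
  | 0 => 1
  | (m + 1) => ((m : ℝ) + 1)⁻¹ *
      ∑ k ∈ Finset.range (m + 1), x (k + 1) * modifiedBell x (m - k)
  decreasing_by omega

/-- The Euler beta function `B(a,b) = Γ(a)Γ(b)/Γ(a+b)` (real arguments). -/
noncomputable def eulerBeta (a b : ℝ) : ℝ :=
  Real.Gamma a * Real.Gamma b / Real.Gamma (a + b)

/-- Generalized harmonic number `H_n^{(k)}(x) = ∑_{j=1}^n 1/(j+x)^k`. -/
noncomputable def genHarmonic (n k : ℕ) (x : ℝ) : ℝ :=
  ∑ j ∈ Finset.Icc 1 n, 1 / ((j : ℝ) + x) ^ k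

/-!
With `a i = (1 + x + i)⁻¹`, `genHarmonic n k x` is the power sum `∑ i, a i ^ k`. The recursion
defining `modifiedBell` is the coefficientwise form of `F' = (∑ k, x (k + 1) X ^ k) F`, which for
power sums is solved by `F = ∏ i, (1 - a i X)⁻¹` (compare logarithmic derivatives). So the left
side is the `m`-th coefficient of `∏_{i < n} (1 + x + i) / (1 + x + i - X)`, and partial fractions,
`N! ∏_{i ≤ N} (u + i)⁻¹ = ∑_{i ≤ N} (-1)^i (N choose i) (u + i)⁻¹`, turn it into
`∏_{i < n} (1 + x + i) / (n - 1)! * ∑_{i < n} (-1)^i (n - 1 choose i) (1 + x + i)^(-(m + 1))`.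
On the right, `1 / B(n, 1 + x) = ∏_{i < n} (1 + x + i) / (n - 1)!`, and expanding
`(1 - e^(-y))^(n - 1)` binomially and integrating term by term gives the same sum.
-/

open Finset PowerSeries MeasureTheory Real
open scoped Nat

theorem factorial_mul_prod_eq_alternating_sum_choose {R : Type*} [CommRing R] (u : R)
    (w : ℕ → R) (hw : ∀ i : ℕ, w i * (u + i) = 1) (N : ℕ) :
    (N ! : R) * ∏ i ∈ range (N + 1), w i =
      ∑ i ∈ range (N + 1), (-1) ^ i * N.choose i * w i := by
  induction N generalizing u w with
  | zero => simp
  | succ N ih =>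
    have hw' : ∀ i : ℕ, w (i + 1) * (u + 1 + i) = 1 := fun i => by
      simpa [add_assoc, add_comm (1 : R)] using hw (i + 1)
    have hdiff : w 0 - w (N + 1) = (N + 1) * (w 0 * w (N + 1)) := by
      have h0 : w 0 * u = 1 := by simpa using hw 0
      have hN : w (N + 1) * (u + (N + 1)) = 1 := by simpa using hw (N + 1)
      linear_combination w (N + 1) * h0 - w 0 * hN
    have pascal := sum_choose_succ_mul (fun i _ => (-1 : R) ^ i * w i) N
    simp only [← mul_assoc, mul_comm _ ((-1 : R) ^ _)] at pascal
    have shifted : ∑ i ∈ range (N + 1), (-1) ^ (i + 1) * (N.choose i : R) * w (i + 1) =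
        -((N ! : R) * ∏ i ∈ range (N + 1), w (i + 1)) := by
      rw [ih (u + 1) (fun i => w (i + 1)) hw', ← sum_neg_distrib]
      exact sum_congr rfl fun i _ => by ring
    rw [pascal, ← ih u w hw, shifted, prod_range_succ, prod_range_succ',
      prod_range_succ (fun i => w (i + 1)), Nat.factorial_succ]
    push_cast
    linear_combination -(N ! : R) * (∏ i ∈ range N, w (i + 1)) * hdiff

section PowerSeries

variable {k : Type*} [Field k]

theorem coeff_inv_one_sub_C_mul_X (a : k) (m : ℕ) : coeff m (1 - C a * X)⁻¹ = a ^ m := by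
  have : (1 - C a * X)⁻¹ = mk (a ^ ·) := by
    rw [PowerSeries.inv_eq_iff_mul_eq_one (by simp)]
    ext (_ | n) <;> simp [mul_sub, ← mul_assoc, pow_succ]
  simp [this]

theorem derivative_inv_one_sub_C_mul_X (a : k) :
    d⁄dX k (1 - C a * X)⁻¹ = C a * (1 - C a * X)⁻¹ ^ 2 := by
  rw [derivative_inv']
  simp [mul_comm]

theorem derivative_prod_inv_one_sub_C_mul_X {ι : Type*} (s : Finset ι) (a : ι → k) :
    d⁄dX k (∏ j ∈ s, (1 - C (a j) * X)⁻¹) =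
      (∑ j ∈ s, C (a j) * (1 - C (a j) * X)⁻¹) * ∏ j ∈ s, (1 - C (a j) * X)⁻¹ := by
  induction s using Finset.cons_induction with
  | empty => simp
  | cons j s hj ih =>
    rw [prod_cons, sum_cons, Derivation.leibniz, ih, derivative_inv_one_sub_C_mul_X, smul_eq_mul,
      smul_eq_mul]
    ring

theorem inv_one_sub_C_inv_mul_X {c : k} (hc : c ≠ 0) :
    (1 - C c⁻¹ * X)⁻¹ = C c * (C c - X)⁻¹ := by
  have : 1 - C c⁻¹ * X = C c⁻¹ * (C c - X) := by
    rw [mul_sub, ← map_mul, inv_mul_cancel₀ hc, map_one]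
  rw [this, PowerSeries.mul_inv_rev, C_inv, inv_inv, mul_comm]

theorem coeff_inv_C_sub_X {c : k} (hc : c ≠ 0) (m : ℕ) :
    coeff m (C c - X)⁻¹ = (c ^ (m + 1))⁻¹ := by
  have : (C c - X)⁻¹ = C c⁻¹ * (1 - C c⁻¹ * X)⁻¹ := by
    rw [inv_one_sub_C_inv_mul_X hc, ← mul_assoc, ← map_mul, inv_mul_cancel₀ hc, map_one,
      one_mul]
  rw [this, coeff_C_mul, coeff_inv_one_sub_C_mul_X, ← pow_succ', inv_pow]

theorem coeff_prod_inv_one_sub_inv_add_nat_mul_X [CharZero k] {b : k}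
    (hb : ∀ i : ℕ, b + i ≠ 0) (N m : ℕ) :
    coeff m (∏ i ∈ range (N + 1), (1 - C (b + i)⁻¹ * X)⁻¹) =
      (∏ i ∈ range (N + 1), (b + i)) / N ! *
        ∑ i ∈ range (N + 1), (-1) ^ i * N.choose i * ((b + i) ^ (m + 1))⁻¹ := by
  set w : ℕ → k⟦X⟧ := fun i => (C (b + i) - X)⁻¹
  have hw : ∀ i : ℕ, w i * (C b - X + (i : k⟦X⟧)) = 1 := fun i => by
    have hunit : constantCoeff (C (b + i) - X) ≠ 0 := by simpa using hb i
    rw [← PowerSeries.inv_mul_cancel _ hunit]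
    simp only [w, map_add, map_natCast]
    ring
  have hprod : ∏ i ∈ range (N + 1), (1 - C (b + i)⁻¹ * X)⁻¹ =
      C ((∏ i ∈ range (N + 1), (b + i)) / N !) *
        ((N ! : k⟦X⟧) * ∏ i ∈ range (N + 1), w i) := by
    simp only [inv_one_sub_C_inv_mul_X (hb _), prod_mul_distrib, ← map_prod, w, ← mul_assoc,
      ← map_natCast (C (R := k)), ← map_mul]
    rw [div_mul_cancel₀ _ (Nat.cast_ne_zero.mpr N.factorial_ne_zero)]
  rw [hprod, factorial_mul_prod_eq_alternating_sum_choose _ w hw, coeff_C_mul, map_sum]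
  congr 1
  refine sum_congr rfl fun i _ => ?_
  rw [show (-1 : k⟦X⟧) ^ i * (N.choose i : k⟦X⟧) = C ((-1) ^ i * N.choose i : k) by simp,
    coeff_C_mul, coeff_inv_C_sub_X (hb i)]

end PowerSeries

theorem modifiedBell_eq_coeff {x : ℕ → ℝ} {F : ℝ⟦X⟧} (h₀ : constantCoeff F = 1)
    (hF : d⁄dX ℝ F = mk (fun k => x (k + 1)) * F) (m : ℕ) : modifiedBell x m = coeff m F := by
  induction m using Nat.strong_induction_on with
  | _ m ih =>
    match m with
    | 0 => simp [modifiedBell, h₀]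
    | m + 1 =>
      have hcoeff := congrArg (coeff m) hF
      rw [coeff_derivative, coeff_mul, Nat.sum_antidiagonal_eq_sum_range_succ_mk] at hcoeff
      rw [modifiedBell, inv_mul_eq_iff_eq_mul₀ (by positivity), mul_comm _ (coeff _ F), hcoeff]
      refine sum_congr rfl fun i _ => ?_
      rw [coeff_mk, ih _ (by grind)]

theorem modifiedBell_powerSum_eq_coeff_prod {ι : Type*} (s : Finset ι) (a : ι → ℝ) (m : ℕ) :
    modifiedBell (fun k => ∑ j ∈ s, a j ^ k) m =
      coeff m (∏ j ∈ s, (1 - C (a j) * X)⁻¹) := by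
  refine modifiedBell_eq_coeff (by simp [map_prod]) ?_ m
  rw [derivative_prod_inv_one_sub_C_mul_X]
  congr 1
  ext n
  simp [map_sum, coeff_inv_one_sub_C_mul_X, pow_succ']

theorem Real.Gamma_natCast_add {b : ℝ} (hb : ∀ i : ℕ, b + i ≠ 0) (n : ℕ) :
    Gamma (n + b) = (∏ i ∈ range n, (b + i)) * Gamma b := by
  induction n with
  | zero => simp
  | succ n ih =>
    rw [prod_range_succ, Nat.cast_succ, add_right_comm,
      Gamma_add_one (by rw [add_comm]; exact hb n), ih]
    ring

theorem one_div_eulerBeta_natCast_succ {b : ℝ} (hb : ∀ i : ℕ, b + i ≠ 0) (N : ℕ) :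
    1 / eulerBeta (N + 1 : ℕ) b = (∏ i ∈ range (N + 1), (b + i)) / N ! := by
  have hΓ : Gamma b ≠ 0 := Gamma_ne_zero fun m h => hb m (by rw [h, neg_add_cancel])
  rw [eulerBeta, Gamma_natCast_add hb, Nat.cast_succ, Gamma_nat_eq_factorial]
  field_simp

theorem genHarmonic_eq_sum_range (n k : ℕ) (x : ℝ) :
    genHarmonic n k x = ∑ i ∈ range n, (1 + x + i)⁻¹ ^ k := by
  rw [genHarmonic, ← Ico_add_one_right_eq_Icc, sum_Ico_eq_sum_range, Nat.add_sub_cancel]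
  refine sum_congr rfl fun i _ => ?_
  rw [one_div, inv_pow]
  push_cast
  ring

theorem integral_exp_neg_mul_mul_pow {c : ℝ} (hc : 0 < c) (m : ℕ) :
    ∫ y in Set.Ioi 0, exp (-c * y) * y ^ m = m ! / c ^ (m + 1) := by
  have h := integral_rpow_mul_exp_neg_mul_Ioi (a := (m : ℝ) + 1) (by positivity) hc
  rw [Gamma_nat_eq_factorial, add_sub_cancel_right, ← Nat.cast_succ, rpow_natCast, div_pow,
    one_pow, one_div_mul_eq_div] at h
  rw [← h]
  refine setIntegral_congr_fun measurableSet_Ioi fun y _ => ?_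
  rw [rpow_natCast, neg_mul, mul_comm]

theorem integrableOn_exp_neg_mul_mul_pow {c : ℝ} (hc : 0 < c) (m : ℕ) :
    IntegrableOn (fun y => exp (-c * y) * y ^ m) (Set.Ioi 0) := by
  have hm : (-1 : ℝ) < m := by linarith [m.cast_nonneg (α := ℝ)]
  refine (integrableOn_rpow_mul_exp_neg_mul_rpow hm one_pos hc).congr_fun (fun y _ => ?_)
    measurableSet_Ioi
  simp only [rpow_one, rpow_natCast]
  ring

theorem integral_exp_neg_mul_mul_one_sub_exp_neg_pow {b : ℝ} (hb : 0 < b) (N m : ℕ) :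
    ∫ y in Set.Ioi 0, exp (-b * y) * (1 - exp (-y)) ^ N * y ^ m / m ! =
      ∑ i ∈ range (N + 1), (-1) ^ i * N.choose i * ((b + i) ^ (m + 1))⁻¹ := by
  have hbi : ∀ i : ℕ, 0 < b + i := fun i => by positivity
  have expand : ∀ y : ℝ, exp (-b * y) * (1 - exp (-y)) ^ N * y ^ m / m ! =
      ∑ i ∈ range (N + 1), ((-1) ^ i * N.choose i / m !) * (exp (-(b + i) * y) * y ^ m) := by
    intro y
    rw [sub_eq_neg_add, add_pow, mul_sum, sum_mul, sum_div]
    refine sum_congr rfl fun i _ => ?_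
    rw [neg_pow, ← exp_nat_mul, one_pow, mul_one, show -(b + i) * y = -b * y + i * -y by ring,
      exp_add]
    ring
  simp_rw [expand]
  rw [integral_finsetSum _ fun i _ => (integrableOn_exp_neg_mul_mul_pow (hbi i) m).const_mul _]
  refine sum_congr rfl fun i _ => ?_
  rw [integral_const_mul, integral_exp_neg_mul_mul_pow (hbi i)]
  field_simp

theorem modifiedBell_eq_integral (n : ℕ) (hn : 0 < n) (m : ℕ) (x : ℝ) (hx : -1 < x) :
    modifiedBell (fun k => genHarmonic n k x) m =
      (1 / eulerBeta (n : ℝ) (1 + x)) *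
        ∫ y in Set.Ioi (0 : ℝ),
          Real.exp (-(1 + x) * y) * (1 - Real.exp (-y)) ^ (n - 1) * y ^ m / (m.factorial) := by
  obtain ⟨N, rfl⟩ := Nat.exists_eq_add_one_of_ne_zero hn.ne'
  have hb : 0 < 1 + x := by linarith
  have hb' : ∀ i : ℕ, 1 + x + i ≠ 0 := fun i => by positivity
  simp_rw [genHarmonic_eq_sum_range]
  rw [modifiedBell_powerSum_eq_coeff_prod, coeff_prod_inv_one_sub_inv_add_nat_mul_X hb',
    one_div_eulerBeta_natCast_succ hb', Nat.add_sub_cancel,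
    integral_exp_neg_mul_mul_one_sub_exp_neg_pow hb]
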